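/- arXiv:2407.08589 — 3 statements merged into one kernel-verified Lean document; each statement's English description precedes it below -/
import Mathlib

section
/- Let q be a prime power, d ≥ 2 and 1 ≤ k < d integers, E ⊆ F_q^k, F ⊆ F_q^{d−k}, and let E ⊕ F = {(x,y) : x ∈ E, y ∈ F} ⊆ F_q^d. Then for every real p ∈ [1,∞), the following exact identity holds: ‖(E ⊕ F)^∧‖_p^p = ‖Ê‖_p^p · ‖F̂‖_p^p + q^{−k}·(q^{−k}·#E)^p · ‖F̂‖_p^p + q^{−(d−k)}·(q^{−(d−k)}·#F)^p · ‖Ê‖_p^p, where Ê and its norm are computed in the ambient space F_q^k, F̂ and its norm are computed in F_q^{d−k}, and (E ⊕ F)^∧ and its norm are computed in F_q^d. (This identity underlies the fact that if E is (p,s)-Salem and F is (p,t)-Salem then E ⊕ F is (p,s′)-Salem for the exponent s′ given in the paper.) -/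
/-! The Fourier transform of `E ⊕ G` factors as `Ê(u) Ĝ(v)`, so the sum of `|(E ⊕ G)^∧|^p` over
all of `F_q^d` is the product of the corresponding full sums for `E` and `G`. Removing the
zero frequency from each full sum, `(A + a)(B + b) - ab = AB + aB + bA` with `a = |Ê(0)|^p`,
`b = |Ĝ(0)|^p`, and `|Ê(0)| = q^{-k} #E`, `|Ĝ(0)| = q^{-(d-k)} #G`. -/

open Finset

/-- The Fourier transform of (the indicator of) a set `E` in a finite vector space
`F_q^ι` (so `F_q^d` when `#ι = d`): `Ê(x) = q^{-#ι} ∑_{y ∈ E} χ(-x·y)`. -/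
noncomputable def fourierTransform {F : Type} [Field F] [Fintype F] [DecidableEq F]
    {ι : Type} [Fintype ι] [DecidableEq ι]
    (χ : AddChar F ℂ) (E : Finset (ι → F)) (x : ι → F) : ℂ :=
  ((Fintype.card F : ℂ) ^ Fintype.card ι)⁻¹ * ∑ y ∈ E, χ (-(∑ i, x i * y i))

/-- `‖Ê‖_p = ( q^{-#ι} ∑_{x ≠ 0} |Ê(x)|^p )^{1/p}`. -/
noncomputable def lpNorm {F : Type} [Field F] [Fintype F] [DecidableEq F]
    {ι : Type} [Fintype ι] [DecidableEq ι]
    (χ : AddChar F ℂ) (E : Finset (ι → F)) (p : ℝ) : ℝ :=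
  (((Fintype.card F : ℝ) ^ Fintype.card ι)⁻¹ *
      ∑ x ∈ Finset.univ.filter (fun x : ι → F => x ≠ 0),
        ‖fourierTransform χ E x‖ ^ p) ^ (1 / p)

theorem Finset.sum_filter_ne_zero_eq_sub {α R : Type*} [Fintype α] [DecidableEq α] [Zero α]
    [AddCommGroup R] (f : α → R) :
    ∑ x ∈ univ.filter (fun x : α => x ≠ 0), f x = ∑ x, f x - f 0 := by
  rw [filter_ne' univ 0, sum_erase_eq_sub (mem_univ 0)]

theorem Fintype.sum_sumArrow_mul {κ ι F R : Type*} [Fintype κ] [DecidableEq κ] [Fintype ι]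
    [DecidableEq ι] [Fintype F] [CommSemiring R] (g : (κ → F) → R) (h : (ι → F) → R) :
    ∑ x : κ ⊕ ι → F, g (x ∘ Sum.inl) * h (x ∘ Sum.inr) = (∑ u, g u) * ∑ v, h v := by
  rw [Fintype.sum_mul_sum, ← Fintype.sum_prod_type']
  exact (Equiv.sumArrowEquivProdArrow κ ι F).sum_comp fun uv => g uv.1 * h uv.2

section FourierTransform

variable {F : Type} [Field F] [Fintype F] [DecidableEq F] {κ ι : Type} [Fintype κ] [DecidableEq κ]
  [Fintype ι] [DecidableEq ι] (χ : AddChar F ℂ)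

theorem fourierTransform_image_sumElim (E : Finset (κ → F)) (G : Finset (ι → F))
    (x : κ ⊕ ι → F) :
    fourierTransform χ ((E ×ˢ G).image fun z => (Sum.elim z.1 z.2 : κ ⊕ ι → F)) x =
      fourierTransform χ E (x ∘ Sum.inl) * fourierTransform χ G (x ∘ Sum.inr) := by
  have hinj : Set.InjOn (fun z : (κ → F) × (ι → F) => (Sum.elim z.1 z.2 : κ ⊕ ι → F))
      (E ×ˢ G : Finset _) := fun a _ b _ h =>
    Prod.ext (funext fun i => congrFun h (Sum.inl i)) (funext fun i => congrFun h (Sum.inr i))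
  have hchar : ∀ z : (κ → F) × (ι → F),
      χ (-∑ i, x i * Sum.elim z.1 z.2 i) =
        χ (-∑ i, (x ∘ Sum.inl) i * z.1 i) * χ (-∑ i, (x ∘ Sum.inr) i * z.2 i) := fun z => by
    rw [Fintype.sum_sum_type, neg_add, AddChar.map_add_eq_mul]
    rfl
  unfold fourierTransform
  rw [sum_image hinj, sum_congr rfl fun z _ => hchar z, sum_product]
  dsimp only
  rw [← sum_mul_sum, Fintype.card_sum, pow_add, mul_inv]
  ring

theorem norm_fourierTransform_image_sumElim_rpow (E : Finset (κ → F)) (G : Finset (ι → F))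
    (p : ℝ) (x : κ ⊕ ι → F) :
    ‖fourierTransform χ ((E ×ˢ G).image fun z => (Sum.elim z.1 z.2 : κ ⊕ ι → F)) x‖ ^ p =
      ‖fourierTransform χ E (x ∘ Sum.inl)‖ ^ p * ‖fourierTransform χ G (x ∘ Sum.inr)‖ ^ p := by
  rw [fourierTransform_image_sumElim, norm_mul, Real.mul_rpow (norm_nonneg _) (norm_nonneg _)]

theorem sum_norm_fourierTransform_image_sumElim_rpow (E : Finset (κ → F))
    (G : Finset (ι → F)) (p : ℝ) :
    ∑ x, ‖fourierTransform χ ((E ×ˢ G).image fun z => (Sum.elim z.1 z.2 : κ ⊕ ι → F)) x‖ ^ p =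
      (∑ u, ‖fourierTransform χ E u‖ ^ p) * ∑ v, ‖fourierTransform χ G v‖ ^ p := by
  simp_rw [norm_fourierTransform_image_sumElim_rpow]
  exact Fintype.sum_sumArrow_mul (fun u => ‖fourierTransform χ E u‖ ^ p)
    fun v => ‖fourierTransform χ G v‖ ^ p

theorem norm_fourierTransform_zero (E : Finset (ι → F)) :
    ‖fourierTransform χ E 0‖ = ((Fintype.card F : ℝ) ^ Fintype.card ι)⁻¹ * #E := by
  simp [fourierTransform]

theorem lpNorm_rpow_eq_sub (E : Finset (ι → F)) {p : ℝ} (hp : p ≠ 0) :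
    lpNorm χ E p ^ p = ((Fintype.card F : ℝ) ^ Fintype.card ι)⁻¹ *
      (∑ x, ‖fourierTransform χ E x‖ ^ p - ‖fourierTransform χ E 0‖ ^ p) := by
  rw [lpNorm, ← Real.rpow_mul (by positivity), one_div_mul_cancel hp, Real.rpow_one,
    sum_filter_ne_zero_eq_sub]

end FourierTransform

theorem lp_direct_sum_general {F : Type} [Field F] [Fintype F] [DecidableEq F]
    (d k : ℕ)
    (χ : AddChar F ℂ)
    (E : Finset (Fin k → F)) (G : Finset (Fin (d - k) → F))
    (p : ℝ) (hp : 1 ≤ p) :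
    lpNorm χ ((E ×ˢ G).image fun z => (Sum.elim z.1 z.2 : Fin k ⊕ Fin (d - k) → F)) p ^ p =
      lpNorm χ E p ^ p * lpNorm χ G p ^ p
        + ((Fintype.card F : ℝ) ^ k)⁻¹ *
            (((Fintype.card F : ℝ) ^ k)⁻¹ * (E.card : ℝ)) ^ p * lpNorm χ G p ^ p
        + ((Fintype.card F : ℝ) ^ (d - k))⁻¹ *
            (((Fintype.card F : ℝ) ^ (d - k))⁻¹ * (G.card : ℝ)) ^ p * lpNorm χ E p ^ p := by
  have hp0 : p ≠ 0 := by linarith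
  have hzero :
      ‖fourierTransform χ ((E ×ˢ G).image fun z => (Sum.elim z.1 z.2 : _ → F)) 0‖ ^ p =
        ‖fourierTransform χ E 0‖ ^ p * ‖fourierTransform χ G 0‖ ^ p :=
    norm_fourierTransform_image_sumElim_rpow χ E G p 0
  rw [lpNorm_rpow_eq_sub _ _ hp0, lpNorm_rpow_eq_sub χ E hp0, lpNorm_rpow_eq_sub χ G hp0,
    sum_norm_fourierTransform_image_sumElim_rpow, hzero, norm_fourierTransform_zero χ E,
    norm_fourierTransform_zero χ G, Fintype.card_sum, Fintype.card_fin, Fintype.card_fin, pow_add,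
    mul_inv]
  ring

/-- The exact product identity for the `L^p` norm of the Fourier transform of a direct
sum `E ⊕ G ⊆ F_q^k × F_q^{d-k} ≅ F_q^d` of sets `E ⊆ F_q^k`, `G ⊆ F_q^{d-k}`. -/
theorem lp_direct_sum {F : Type} [Field F] [Fintype F] [DecidableEq F]
    (d k : ℕ) (hd : 2 ≤ d) (hk : 1 ≤ k) (hkd : k < d)
    (χ : AddChar F ℂ) (hχ : ∃ a, χ a ≠ 1)
    (E : Finset (Fin k → F)) (G : Finset (Fin (d - k) → F))
    (p : ℝ) (hp : 1 ≤ p) :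
    lpNorm χ ((E ×ˢ G).image fun z => (Sum.elim z.1 z.2 : Fin k ⊕ Fin (d - k) → F)) p ^ p =
      lpNorm χ E p ^ p * lpNorm χ G p ^ p
        + ((Fintype.card F : ℝ) ^ k)⁻¹ *
            (((Fintype.card F : ℝ) ^ k)⁻¹ * (E.card : ℝ)) ^ p * lpNorm χ G p ^ p
        + ((Fintype.card F : ℝ) ^ (d - k))⁻¹ *
            (((Fintype.card F : ℝ) ^ (d - k))⁻¹ * (G.card : ℝ)) ^ p * lpNorm χ E p ^ p :=
  lp_direct_sum_general d k χ E G p hp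
end

section
/- Let q be a prime power and suppose d = m·n for integers m ≥ 2 and n ≥ 1. Let E = { (k, k, …, k) : k ∈ F_q^n } ⊆ F_q^d be the diagonal consisting of m copies of each k ∈ F_q^n. Then #E = q^n and for every real p ∈ [1,∞) the exact identity ‖Ê‖_p^p = q^{−d} · (q^{d−n} − 1) · q^{(n−d)p} holds. In particular ‖Ê‖_p ≤ q^{−d}(#E)^{1−1/p} with equality up to a factor tending to 1, so E is (p,s)-Salem if and only if s ≤ 1/p. -/
/-!
Write `F_q^d = (F_q^n)^m` with coordinates `(j, i)`. For `y = (k, …, k)` the pairing is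
`x · y = ∑ i, (∑ j, x (j, i)) * k i`, so summing over `k ∈ F_q^n` and using orthogonality of
the nontrivial character `χ` gives `Ê(x) = q^{n-d}` when every column sum of `x` vanishes and
`Ê(x) = 0` otherwise. The column-sum map `F_q^d → F_q^n` is onto, so its kernel has
`q^{d-n}` points, and `‖Ê‖_p^p` is `q^{-d}` times `q^{d-n} - 1` copies of `q^{(n-d)p}`.
Dropping the `- 1` gives exactly `(q^{-d} (q^n)^{1-1/p})^p`.
-/

open Finset

namespace AddChar

theorem map_sum_eq_prod {A R ι : Type*} [AddCommMonoid A] [CommMonoid R]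
    (χ : AddChar A R) (s : Finset ι) (a : ι → A) :
    χ (∑ i ∈ s, a i) = ∏ i ∈ s, χ (a i) := by
  classical
  induction s using Finset.induction_on with
  | empty => simp
  | insert i s hi ih => rw [sum_insert hi, prod_insert hi, map_add_eq_mul, ih]

theorem sum_neg_dotProduct_eq_ite {F R ι : Type*} [Field F] [Fintype F] [DecidableEq F]
    [CommRing R] [IsDomain R] [Fintype ι] [DecidableEq ι] {χ : AddChar F R} (hχ : χ ≠ 1)
    (c : ι → F) :
    ∑ k : ι → F, χ (-(∑ i, c i * k i)) =
      if c = 0 then (Fintype.card F : R) ^ Fintype.card ι else 0 := by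
  calc ∑ k : ι → F, χ (-(∑ i, c i * k i))
      = ∑ k : ι → F, ∏ i, χ (k i * -c i) := by
        refine sum_congr rfl fun k _ => ?_
        rw [← sum_neg_distrib, χ.map_sum_eq_prod]
        simp only [mul_neg, mul_comm]
    _ = ∏ i, ∑ t : F, χ (t * -c i) := (Fintype.prod_sum fun i t => χ (t * -c i)).symm
    _ = ∏ i, if -c i = 0 then (Fintype.card F : R) else 0 := by
        simp only [sum_mulShift _ (IsPrimitive.of_ne_one hχ), Nat.cast_ite, Nat.cast_zero]
    _ = _ := by
        rw [Fintype.prod_ite_zero, prod_const, card_univ]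
        simp only [neg_eq_zero, funext_iff, Pi.zero_apply]

end AddChar

section LpNorm

variable {F ι : Type} [Field F] [Fintype F] [DecidableEq F] [Fintype ι] [DecidableEq ι]

theorem lpNorm_nonneg (χ : AddChar F ℂ) (E : Finset (ι → F)) (p : ℝ) : 0 ≤ lpNorm χ E p :=
  Real.rpow_nonneg (by positivity) _

theorem lpNorm_rpow (χ : AddChar F ℂ) (E : Finset (ι → F)) {p : ℝ} (hp : p ≠ 0) :
    lpNorm χ E p ^ p = ((Fintype.card F : ℝ) ^ Fintype.card ι)⁻¹ *
      ∑ x ∈ univ.filter (fun x : ι → F => x ≠ 0), ‖fourierTransform χ E x‖ ^ p := by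
  rw [lpNorm, one_div, Real.rpow_inv_rpow (by positivity) hp]

end LpNorm

section Diagonal

variable {κ ι F : Type}

def diagonalMap (κ : Type) (k : ι → F) : κ × ι → F := fun ji => k ji.2

theorem diagonalMap_injective [Nonempty κ] :
    Function.Injective (diagonalMap (F := F) (ι := ι) κ) :=
  fun _ _ h => funext fun i => congrFun h (Classical.arbitrary κ, i)

variable (κ ι F) in
def colSum [Fintype κ] [AddCommMonoid F] : (κ × ι → F) →+ (ι → F) where
  toFun x i := ∑ j, x (j, i)
  map_zero' := by ext; simp
  map_add' x y := by ext; simp [sum_add_distrib]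

theorem colSum_surjective [Fintype κ] [DecidableEq κ] [Nonempty κ] [AddCommMonoid F] :
    Function.Surjective (colSum κ ι F) := by
  intro c
  refine ⟨fun ji => if ji.1 = Classical.arbitrary κ then c ji.2 else 0, funext fun i => ?_⟩
  simp [colSum]

theorem sum_mul_diagonalMap [Fintype κ] [Fintype ι] [NonUnitalNonAssocSemiring F]
    (x : κ × ι → F) (k : ι → F) :
    ∑ ji, x ji * diagonalMap κ k ji = ∑ i, colSum κ ι F x i * k i := by
  rw [Fintype.sum_prod_type, sum_comm]
  simp [diagonalMap, colSum, sum_mul]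

theorem card_filter_colSum_eq_zero [Fintype κ] [DecidableEq κ] [Nonempty κ] [Fintype ι]
    [DecidableEq ι] [AddCommGroup F] [Fintype F] [DecidableEq F] :
    #{x : κ × ι → F | colSum κ ι F x = 0} =
      Fintype.card F ^ (Fintype.card κ * Fintype.card ι - Fintype.card ι) := by
  have h := (colSum κ ι F).ker.card_mul_index
  rw [AddSubgroup.index_ker, AddMonoidHom.range_eq_top_of_surjective _ colSum_surjective,
    AddSubgroup.card_top] at h
  simp only [Nat.card_eq_fintype_card, Fintype.card_fun, Fintype.card_prod] at h
  rw [← pow_sub_mul_pow _ (Nat.le_mul_of_pos_left _ Fintype.card_pos)] at h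
  rw [← Nat.eq_of_mul_eq_mul_right (pow_pos Fintype.card_pos _) h, ← Fintype.card_subtype]
  exact Fintype.card_congr (Equiv.subtypeEquivRight fun _ => AddMonoidHom.mem_ker.symm)

variable (κ ι F) in
def copyDiagonal [Fintype κ] [Fintype ι] [DecidableEq ι] [Fintype F] [DecidableEq F] :
    Finset (κ × ι → F) :=
  univ.image (diagonalMap κ)

theorem card_copyDiagonal [Fintype κ] [Nonempty κ] [Fintype ι] [DecidableEq ι] [Fintype F]
    [DecidableEq F] : #(copyDiagonal κ ι F) = Fintype.card F ^ Fintype.card ι := by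
  rw [copyDiagonal, card_image_of_injective _ diagonalMap_injective, card_univ,
    Fintype.card_fun]

variable [Fintype κ] [DecidableEq κ] [Nonempty κ] [Fintype ι] [DecidableEq ι]
  [Field F] [Fintype F] [DecidableEq F] {χ : AddChar F ℂ}

theorem fourierTransform_copyDiagonal (hχ : χ ≠ 1) (x : κ × ι → F) :
    fourierTransform χ (copyDiagonal κ ι F) x =
      ((Fintype.card F : ℂ) ^ Fintype.card (κ × ι))⁻¹ *
        if colSum κ ι F x = 0 then (Fintype.card F : ℂ) ^ Fintype.card ι else 0 := by
  rw [fourierTransform, copyDiagonal, sum_image fun k _ k' _ h => diagonalMap_injective h]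
  simp only [sum_mul_diagonalMap, AddChar.sum_neg_dotProduct_eq_ite hχ]

theorem norm_fourierTransform_copyDiagonal (hχ : χ ≠ 1) (x : κ × ι → F) :
    ‖fourierTransform χ (copyDiagonal κ ι F) x‖ =
      if colSum κ ι F x = 0 then
        (Fintype.card F : ℝ) ^ ((Fintype.card ι : ℝ) - (Fintype.card κ * Fintype.card ι : ℕ))
      else 0 := by
  have hq : (0 : ℝ) < Fintype.card F := by exact_mod_cast Fintype.card_pos
  rw [fourierTransform_copyDiagonal hχ, Real.rpow_sub hq, Real.rpow_natCast, Real.rpow_natCast]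
  split_ifs <;> simp [Fintype.card_prod, div_eq_inv_mul]

theorem sum_norm_fourierTransform_copyDiagonal_rpow (hχ : χ ≠ 1) {p : ℝ} (hp : p ≠ 0) :
    ∑ x ∈ univ.filter (fun x : κ × ι → F => x ≠ 0),
        ‖fourierTransform χ (copyDiagonal κ ι F) x‖ ^ p =
      ((Fintype.card F : ℝ) ^ (Fintype.card κ * Fintype.card ι - Fintype.card ι) - 1) *
        (Fintype.card F : ℝ) ^
          (((Fintype.card ι : ℝ) - (Fintype.card κ * Fintype.card ι : ℕ)) * p) := by
  have hterm (x : κ × ι → F) : ‖fourierTransform χ (copyDiagonal κ ι F) x‖ ^ p =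
      if colSum κ ι F x = 0 then (Fintype.card F : ℝ) ^
          (((Fintype.card ι : ℝ) - (Fintype.card κ * Fintype.card ι : ℕ)) * p)
      else 0 := by
    rw [norm_fourierTransform_copyDiagonal hχ]
    split_ifs
    exacts [(Real.rpow_mul (Nat.cast_nonneg _) _ _).symm, Real.zero_rpow hp]
  have hker : univ.filter (fun x : κ × ι → F => x ≠ 0 ∧ colSum κ ι F x = 0) =
      (univ.filter fun x => colSum κ ι F x = 0).erase 0 := by
    ext x; simp
  rw [sum_congr rfl fun x _ => hterm x, sum_ite, sum_const_zero, add_zero, sum_const,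
    filter_filter, hker, card_erase_of_mem (by simp), card_filter_colSum_eq_zero, nsmul_eq_mul,
    Nat.cast_sub (Nat.one_le_pow _ _ Fintype.card_pos), Nat.cast_pow, Nat.cast_one]

theorem lpNorm_copyDiagonal_rpow (hχ : χ ≠ 1) {p : ℝ} (hp : p ≠ 0) :
    lpNorm χ (copyDiagonal κ ι F) p ^ p =
      ((Fintype.card F : ℝ) ^ (Fintype.card κ * Fintype.card ι))⁻¹ *
        ((Fintype.card F : ℝ) ^ (Fintype.card κ * Fintype.card ι - Fintype.card ι) - 1) *
        (Fintype.card F : ℝ) ^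
          (((Fintype.card ι : ℝ) - (Fintype.card κ * Fintype.card ι : ℕ)) * p) := by
  rw [lpNorm_rpow _ _ hp, sum_norm_fourierTransform_copyDiagonal_rpow hχ hp, Fintype.card_prod,
    mul_assoc]

theorem lpNorm_copyDiagonal_le (hχ : χ ≠ 1) {p : ℝ} (hp : 0 < p) :
    lpNorm χ (copyDiagonal κ ι F) p ≤
      ((Fintype.card F : ℝ) ^ (Fintype.card κ * Fintype.card ι))⁻¹ *
        (#(copyDiagonal κ ι F) : ℝ) ^ (1 - 1 / p) := by
  have hq : (0 : ℝ) < Fintype.card F := by exact_mod_cast Fintype.card_pos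
  have hNK : Fintype.card ι ≤ Fintype.card κ * Fintype.card ι :=
    Nat.le_mul_of_pos_left _ Fintype.card_pos
  rw [← Real.rpow_le_rpow_iff (lpNorm_nonneg _ _ _) (by positivity) hp,
    lpNorm_copyDiagonal_rpow hχ hp.ne', card_copyDiagonal]
  calc _ ≤ ((Fintype.card F : ℝ) ^ (Fintype.card κ * Fintype.card ι))⁻¹ *
        (Fintype.card F : ℝ) ^ (Fintype.card κ * Fintype.card ι - Fintype.card ι) *
        (Fintype.card F : ℝ) ^
          (((Fintype.card ι : ℝ) - (Fintype.card κ * Fintype.card ι : ℕ)) * p) := by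
        gcongr; linarith
    _ = _ := by
        simp only [Nat.cast_pow, ← Real.rpow_natCast, Nat.cast_sub hNK, ← Real.rpow_neg hq.le,
          ← Real.rpow_mul hq.le, ← Real.rpow_add hq]
        congr 1
        field_simp
        ring

end Diagonal

theorem lp_diagonal_general {F : Type} [Field F] [Fintype F] [DecidableEq F]
    (m n : ℕ) (hm : 2 ≤ m)
    (χ : AddChar F ℂ) (hχ : ∃ a, χ a ≠ 1)
    (E : Finset (Fin m × Fin n → F))
    (hE : E = Finset.univ.image fun k : Fin n → F =>
      (fun ji : Fin m × Fin n => k ji.2 : Fin m × Fin n → F)) :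
    E.card = Fintype.card F ^ n ∧
    ∀ p : ℝ, 1 ≤ p →
      lpNorm χ E p ^ p =
        ((Fintype.card F : ℝ) ^ (m * n))⁻¹ * ((Fintype.card F : ℝ) ^ (m * n - n) - 1) *
          (Fintype.card F : ℝ) ^ (((n : ℝ) - (m * n : ℕ)) * p) ∧
      lpNorm χ E p ≤
        ((Fintype.card F : ℝ) ^ (m * n))⁻¹ * (E.card : ℝ) ^ (1 - 1 / p) := by
  have : Nonempty (Fin m) := ⟨⟨0, by omega⟩⟩
  have hχ : χ ≠ 1 := AddChar.ne_one_iff.mpr hχ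
  change E = copyDiagonal (Fin m) (Fin n) F at hE
  subst hE
  refine ⟨by simpa using card_copyDiagonal (κ := Fin m) (ι := Fin n) (F := F),
    fun p hp => ⟨?_, ?_⟩⟩
  · simpa using lpNorm_copyDiagonal_rpow (κ := Fin m) (ι := Fin n) hχ (p := p) (by positivity)
  · simpa using lpNorm_copyDiagonal_le (κ := Fin m) (ι := Fin n) hχ (p := p) (by positivity)

/-- For the diagonal `E = {(k,…,k) : k ∈ F_q^n} ⊆ (F_q^n)^m ≅ F_q^{mn} = F_q^d`
(with `m ≥ 2`, `n ≥ 1`): `#E = q^n`, the exact identity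
`‖Ê‖_p^p = q^{-d}(q^{d-n} - 1)q^{(n-d)p}` holds for every `p ∈ [1,∞)`, and in
particular `‖Ê‖_p ≤ q^{-d}(#E)^{1-1/p}`. -/
theorem lp_diagonal {F : Type} [Field F] [Fintype F] [DecidableEq F]
    (m n : ℕ) (hm : 2 ≤ m) (hn : 1 ≤ n)
    (χ : AddChar F ℂ) (hχ : ∃ a, χ a ≠ 1)
    (E : Finset (Fin m × Fin n → F))
    (hE : E = Finset.univ.image fun k : Fin n → F =>
      (fun ji : Fin m × Fin n => k ji.2 : Fin m × Fin n → F)) :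
    E.card = Fintype.card F ^ n ∧
    ∀ p : ℝ, 1 ≤ p →
      lpNorm χ E p ^ p =
        ((Fintype.card F : ℝ) ^ (m * n))⁻¹ * ((Fintype.card F : ℝ) ^ (m * n - n) - 1) *
          (Fintype.card F : ℝ) ^ (((n : ℝ) - (m * n : ℕ)) * p) ∧
      lpNorm χ E p ≤
        ((Fintype.card F : ℝ) ^ (m * n))⁻¹ * (E.card : ℝ) ^ (1 - 1 / p) :=
  lp_diagonal_general m n hm χ hχ E hE
end

section
/- There exists an absolute constant C such that for every prime power q and every nontrivial additive character χ of F_q, the Kloosterman sums K(a,b) = ∑_{x ∈ F_q, x ≠ 0} χ(a·x + b·x^{−1}) satisfy ( q^{−2} ∑_{(a,b) ∈ F_q² \ {(0,0)}} |K(a,b)|⁴ )^{1/4} ≤ C·√q. -/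
/-!
Expanding the fourth power and summing over `(a, b) ∈ F²` by orthogonality of characters gives
`∑_{a,b} |K(a,b)|⁴ = q² E(H)`, where `E(H)` is the additive energy of the hyperbola
`H = {(x, x⁻¹) : x ≠ 0}`. If `x + y = u + v ≠ 0` and `x⁻¹ + y⁻¹ = u⁻¹ + v⁻¹`, then also `xy = uv`,
so `{u, v} = {x, y}`; the only other coincidences are `y = -x`, `v = -u`. Hence
`E(H) ≤ 3|H|² ≤ 3q²` and the fourth moment is at most `3q⁴`.
-/

open Finset
open scoped Combinatorics.Additive ComplexConjugate

section FourthMoment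

variable {ι G : Type*} [Fintype ι] [AddCommGroup G] [Finite G]

lemma AddChar.norm_sum_sq (ψ : AddChar G ℂ) (S : Finset G) :
    (‖∑ s ∈ S, ψ s‖ : ℂ) ^ 2 = ∑ x ∈ S ×ˢ S, ψ (x.1 - x.2) := by
  rw [← Complex.ofReal_pow, Complex.sq_norm, ← Complex.mul_conj, map_sum, sum_mul_sum,
    sum_product]
  simp only [sub_eq_add_neg, AddChar.map_add_eq_mul, AddChar.map_neg_eq_conj]

lemma AddChar.norm_sum_pow_four (ψ : AddChar G ℂ) (S : Finset G) :
    (‖∑ s ∈ S, ψ s‖ : ℂ) ^ 4 =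
      ∑ x ∈ (S ×ˢ S) ×ˢ S ×ˢ S, ψ (x.1.1 + x.2.1 - (x.1.2 + x.2.2)) := by
  rw [show 4 = 2 * 2 from rfl, pow_mul, AddChar.norm_sum_sq, sq, sum_mul_sum, ← sum_product']
  refine sum_congr rfl fun x _ => ?_
  rw [← AddChar.map_add_eq_mul]
  congr 1
  abel

lemma sum_norm_sum_addChar_pow_four [DecidableEq G] (ψ : ι → AddChar G ℂ) (N : ℕ)
    (horth : ∀ g, ∑ i, ψ i g = if g = 0 then (N : ℂ) else 0) (S : Finset G) :
    ∑ i, ‖∑ s ∈ S, ψ i s‖ ^ 4 = N * E[S] := by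
  apply Complex.ofReal_injective
  push_cast
  simp_rw [AddChar.norm_sum_pow_four]
  rw [sum_comm, addEnergy, natCast_card_filter, mul_sum]
  refine sum_congr rfl fun x _ => ?_
  simp only [horth, sub_eq_zero]
  split_ifs <;> simp

end FourthMoment

section Field

variable {F : Type*} [Field F]

lemma eq_and_eq_or_eq_and_eq_or_eq_neg_of_add_eq_of_inv_add_eq {x y u v : F}
    (hx : x ≠ 0) (hy : y ≠ 0) (hu : u ≠ 0) (hv : v ≠ 0)
    (hsum : x + y = u + v) (hinv : x⁻¹ + y⁻¹ = u⁻¹ + v⁻¹) :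
    (u = x ∧ v = y) ∨ (u = y ∧ v = x) ∨ (y = -x ∧ v = -u) := by
  by_cases hxy : x + y = 0
  · exact Or.inr (Or.inr ⟨eq_neg_of_add_eq_zero_right hxy,
      eq_neg_of_add_eq_zero_right (hsum ▸ hxy)⟩)
  -- `x⁻¹ + y⁻¹ = (x + y) / (x y)`: the products agree, so `u, v` and `x, y` solve one quadratic
  have hprod : u * v = x * y := by
    field_simp at hinv
    exact mul_left_cancel₀ hxy (by linear_combination hinv - x * y * hsum)
  have hroots : (u - x) * (u - y) = 0 := by linear_combination (-u) * hsum - hprod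
  rcases mul_eq_zero.mp hroots with h | h
  · exact Or.inl ⟨sub_eq_zero.mp h, by linear_combination -hsum - h⟩
  · exact Or.inr (Or.inl ⟨sub_eq_zero.mp h, by linear_combination -hsum - h⟩)

def pairChar (χ : AddChar F ℂ) (a : F × F) : AddChar (F × F) ℂ where
  toFun s := χ (a.1 * s.1 + a.2 * s.2)
  map_zero_eq_one' := by simp
  map_add_eq_mul' s t := by
    rw [← AddChar.map_add_eq_mul]
    congr 1
    simp only [Prod.fst_add, Prod.snd_add]
    ring

lemma pairChar_apply (χ : AddChar F ℂ) (a s : F × F) :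
    pairChar χ a s = χ (a.1 * s.1 + a.2 * s.2) := rfl

end Field

section FiniteField

variable {F : Type*} [Field F] [Fintype F] [DecidableEq F]

def kloosterman (χ : AddChar F ℂ) (a b : F) : ℂ :=
  ∑ x ∈ univ.filter (fun x : F => x ≠ 0), χ (a * x + b * x⁻¹)

lemma sum_pairChar_apply {χ : AddChar F ℂ} (hχ : χ ≠ 1) (s : F × F) :
    ∑ a, pairChar χ a s = if s = 0 then ((Fintype.card F ^ 2 : ℕ) : ℂ) else 0 := by
  have hprim := AddChar.IsPrimitive.of_ne_one hχ
  simp only [pairChar_apply, Fintype.sum_prod_type, AddChar.map_add_eq_mul, ← sum_mul_sum,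
    AddChar.sum_mulShift _ hprim, Prod.ext_iff, Prod.fst_zero, Prod.snd_zero]
  split_ifs <;> simp_all [sq]

variable (F) in
def hyperbola : Finset (F × F) :=
  (univ.filter (fun x : F => x ≠ 0)).image fun x => (x, x⁻¹)

lemma card_hyperbola_le : #(hyperbola F) ≤ Fintype.card F :=
  card_image_le.trans (card_le_univ _)

lemma kloosterman_eq_sum_hyperbola (χ : AddChar F ℂ) (a : F × F) :
    kloosterman χ a.1 a.2 = ∑ p ∈ hyperbola F, pairChar χ a p := by
  rw [hyperbola, sum_image fun x _ y _ h => congrArg Prod.fst h]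
  rfl

lemma hyperbola_add_eq_add {p₁ p₂ q₁ q₂ : F × F} (hp₁ : p₁ ∈ hyperbola F)
    (hp₂ : p₂ ∈ hyperbola F) (hq₁ : q₁ ∈ hyperbola F) (hq₂ : q₂ ∈ hyperbola F)
    (h : p₁ + q₁ = p₂ + q₂) :
    (p₂ = p₁ ∧ q₂ = q₁) ∨ (p₂ = q₁ ∧ q₂ = p₁) ∨ (q₁ = -p₁ ∧ q₂ = -p₂) := by
  simp only [hyperbola, mem_image, mem_filter, mem_univ, true_and] at hp₁ hp₂ hq₁ hq₂
  obtain ⟨x, hx, rfl⟩ := hp₁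
  obtain ⟨u, hu, rfl⟩ := hp₂
  obtain ⟨y, hy, rfl⟩ := hq₁
  obtain ⟨v, hv, rfl⟩ := hq₂
  simp only [Prod.ext_iff, Prod.fst_add, Prod.snd_add] at h
  rcases eq_and_eq_or_eq_and_eq_or_eq_neg_of_add_eq_of_inv_add_eq hx hy hu hv h.1 h.2 with
    ⟨rfl, rfl⟩ | ⟨rfl, rfl⟩ | ⟨rfl, rfl⟩ <;> simp

lemma addEnergy_hyperbola_le : E[hyperbola F] ≤ 3 * #(hyperbola F) ^ 2 := by
  set H := hyperbola F
  have hsub : {x ∈ (H ×ˢ H) ×ˢ H ×ˢ H | x.1.1 + x.2.1 = x.1.2 + x.2.2} ⊆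
      ((H ×ˢ H).image fun p => ((p.1, p.1), (p.2, p.2))) ∪
        ((H ×ˢ H).image fun p => ((p.1, p.2), (p.2, p.1))) ∪
        ((H ×ˢ H).image fun p => ((p.1, p.2), (-p.1, -p.2))) := by
    rintro ⟨⟨p₁, p₂⟩, q₁, q₂⟩ hx
    simp only [mem_filter, mem_product] at hx
    obtain ⟨⟨⟨hp₁, hp₂⟩, hq₁, hq₂⟩, h⟩ := hx
    rcases hyperbola_add_eq_add hp₁ hp₂ hq₁ hq₂ h with ⟨rfl, rfl⟩ | ⟨rfl, rfl⟩ | ⟨rfl, rfl⟩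
    · exact mem_union_left _ <| mem_union_left _ <|
        mem_image.mpr ⟨(_, _), mk_mem_product hp₁ hq₁, rfl⟩
    · exact mem_union_left _ <| mem_union_right _ <|
        mem_image.mpr ⟨(_, _), mk_mem_product hp₁ hp₂, rfl⟩
    · exact mem_union_right _ <| mem_image.mpr ⟨(_, _), mk_mem_product hp₁ hp₂, rfl⟩
  calc E[H] ≤ _ := card_le_card hsub
    _ ≤ #((H ×ˢ H).image fun p => ((p.1, p.1), (p.2, p.2))) +
          #((H ×ˢ H).image fun p => ((p.1, p.2), (p.2, p.1))) +
          #((H ×ˢ H).image fun p => ((p.1, p.2), (-p.1, -p.2))) :=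
      (card_union_le _ _).trans (by gcongr; exact card_union_le _ _)
    _ ≤ #(H ×ˢ H) + #(H ×ˢ H) + #(H ×ˢ H) := by gcongr <;> exact card_image_le
    _ = 3 * #H ^ 2 := by rw [card_product]; ring

lemma sum_norm_kloosterman_pow_four_le {χ : AddChar F ℂ} (hχ : χ ≠ 1) :
    ∑ a : F × F, ‖kloosterman χ a.1 a.2‖ ^ 4 ≤ 3 * (Fintype.card F : ℝ) ^ 4 := by
  simp_rw [kloosterman_eq_sum_hyperbola,
    sum_norm_sum_addChar_pow_four _ _ (sum_pairChar_apply hχ)]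
  have hH : #(hyperbola F) ≤ Fintype.card F := card_hyperbola_le
  have hE : Fintype.card F ^ 2 * E[hyperbola F] ≤ 3 * Fintype.card F ^ 4 := calc
    _ ≤ Fintype.card F ^ 2 * (3 * Fintype.card F ^ 2) := by
      gcongr
      exact addEnergy_hyperbola_le.trans (by gcongr)
    _ = 3 * Fintype.card F ^ 4 := by ring
  exact_mod_cast hE

end FiniteField

/-- The `L⁴` bound for Kloosterman sums `K(a,b) = ∑_{x ∈ F_q^*} χ(ax + bx⁻¹)`: there is
an absolute constant `C` such that for every finite field `F_q` and every nontrivial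
additive character `χ`, `( q^{-2} ∑_{(a,b) ≠ (0,0)} |K(a,b)|⁴ )^{1/4} ≤ C√q`. -/
theorem kloosterman_sum_l4 :
    ∃ C : ℝ, 0 < C ∧
      ∀ (F : Type) [Field F] [Fintype F] [DecidableEq F],
        ∀ χ : AddChar F ℂ, (∃ a, χ a ≠ 1) →
          (((Fintype.card F : ℝ) ^ 2)⁻¹ *
                ∑ z ∈ Finset.univ.filter (fun z : F × F => z ≠ (0, 0)),
                  ‖∑ x ∈ Finset.univ.filter (fun x : F => x ≠ 0),
                      χ (z.1 * x + z.2 * x⁻¹)‖ ^ (4 : ℕ)) ^ ((1 : ℝ) / 4) ≤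
            C * Real.sqrt (Fintype.card F : ℝ) := by
  refine ⟨2, two_pos, fun F _ _ _ χ hχ => ?_⟩
  set q : ℝ := (Fintype.card F : ℝ)
  have hq : 0 < q := Nat.cast_pos.mpr Fintype.card_pos
  have hsum : ∑ z ∈ univ.filter (fun z : F × F => z ≠ (0, 0)), ‖kloosterman χ z.1 z.2‖ ^ 4
      ≤ 3 * q ^ 4 :=
    (sum_le_sum_of_subset_of_nonneg (filter_subset _ _) fun _ _ _ => by positivity).trans
      (sum_norm_kloosterman_pow_four_le (AddChar.ne_one_iff.mpr hχ))
  rw [one_div, Real.rpow_inv_le_iff_of_pos (by positivity) (by positivity) four_pos]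
  calc (q ^ 2)⁻¹ * _ ≤ (q ^ 2)⁻¹ * (3 * q ^ 4) := by gcongr; exact hsum
    _ = 3 * q ^ 2 := by field_simp
    _ ≤ 16 * q ^ 2 := by gcongr; norm_num
    _ = (2 * √q) ^ (4 : ℕ) := by
      rw [mul_pow, show √q ^ 4 = (√q ^ 2) ^ 2 by ring, Real.sq_sqrt hq.le]
      norm_num
    _ = (2 * √q) ^ (4 : ℝ) := by norm_cast
end
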